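/- Let W be an n×n real symmetric positive semidefinite matrix, J an m×n real matrix, S and Λ diagonal m×m matrices with strictly positive diagonal entries, and δₚ > 0, δ_d > 0. Then the full regularized symmetrized KKT matrix M = [[W + δₚI, 0, Jᵀ], [0, S⁻¹Λ, −I], [J, −I, −δ_d I]] (a symmetric (n+2m)×(n+2m) matrix written in 3×3 block form) has inertia (n+m, m, 0): exactly n+m positive eigenvalues, exactly m negative eigenvalues, and no zero eigenvalues. In particular, M is invertible. -/

import Mathlib

open Matrix Finset Module

/-! The matrix is quasi-definite: its leading block `[[W + δₚI, 0], [0, S⁻¹Λ]]` and the negated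
trailing block `δ_d I` are positive definite. For `K = [[A, Bᵀ], [B, -C]]` with `A` and `C`
positive definite, the quadratic form of `K` is positive definite on the graph `{(x, C⁻¹Bx)}`, of
dimension `n + m`, and negative definite on `{(0, y)}`, of dimension `m`. In an orthonormal
eigenbasis a subspace on which the form is positive (negative) definite injects into the
coordinates belonging to positive (negative) eigenvalues, so these dimensions are lower bounds for
the two eigenvalue counts; as they add up to the size of `K`, both are exact and no eigenvalue
vanishes. -/

theorem card_filter_pos_add_card_filter_neg_add_card_filter_eq_zero {ι : Type*} [Fintype ι]
    (f : ι → ℝ) : #{i | 0 < f i} + #{i | f i < 0} + #{i | f i = 0} = Fintype.card ι := by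
  simp only [Finset.card_filter, Fintype.card_eq_sum_ones, ← Finset.sum_add_distrib]
  refine Finset.sum_congr rfl fun i _ => ?_
  rcases lt_trichotomy (f i) 0 with h | h | h <;> split_ifs <;> first | rfl | linarith

namespace Matrix.IsHermitian

variable {ι : Type*} [Fintype ι] [DecidableEq ι] {A : Matrix ι ι ℝ} (hA : A.IsHermitian)

theorem dotProduct_mulVec_eq_sum_eigenvalues (x : ι → ℝ) :
    x ⬝ᵥ (A *ᵥ x) = ∑ i, hA.eigenvalues i * (⇑(hA.eigenvectorBasis i) ⬝ᵥ x) ^ 2 := by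
  have hx : x = ∑ i, (⇑(hA.eigenvectorBasis i) ⬝ᵥ x) • ⇑(hA.eigenvectorBasis i) := by
    simpa [EuclideanSpace.inner_eq_star_dotProduct, dotProduct_comm] using
      congrArg WithLp.ofLp (hA.eigenvectorBasis.sum_repr' (WithLp.toLp 2 x)).symm
  calc x ⬝ᵥ (A *ᵥ x)
      = x ⬝ᵥ (A *ᵥ ∑ i, (⇑(hA.eigenvectorBasis i) ⬝ᵥ x) • ⇑(hA.eigenvectorBasis i)) := by
        rw [← hx]
    _ = _ := by
      simp only [mulVec_sum, mulVec_smul, mulVec_eigenvectorBasis, dotProduct_sum,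
        dotProduct_smul, smul_eq_mul]
      exact Finset.sum_congr rfl fun i _ => by rw [dotProduct_comm x]; ring

theorem finrank_le_card_filter_eigenvalues (p : ℝ → Prop) [DecidablePred p]
    (V : Submodule ℝ (ι → ℝ))
    (hV : ∀ x ∈ V, (∀ i, p (hA.eigenvalues i) → ⇑(hA.eigenvectorBasis i) ⬝ᵥ x = 0) → x = 0) :
    finrank ℝ V ≤ #{i | p (hA.eigenvalues i)} := by
  let coords : Matrix {i // p (hA.eigenvalues i)} ι ℝ := fun i => hA.eigenvectorBasis i
  have hinj : Function.Injective (coords.mulVecLin.domRestrict V) := by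
    refine (injective_iff_map_eq_zero _).2 fun x hx => Subtype.ext <| hV x x.2 fun i hi => ?_
    exact congrFun hx ⟨i, hi⟩
  simpa [Fintype.card_subtype] using LinearMap.finrank_le_finrank_of_injective hinj

theorem finrank_le_card_pos_eigenvalues (V : Submodule ℝ (ι → ℝ))
    (hV : ∀ x ∈ V, x ≠ 0 → 0 < x ⬝ᵥ (A *ᵥ x)) :
    finrank ℝ V ≤ #{i | 0 < hA.eigenvalues i} := by
  refine hA.finrank_le_card_filter_eigenvalues (0 < ·) V fun x hx hcoord => ?_
  by_contra hne
  refine (hV x hx hne).not_ge ?_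
  rw [hA.dotProduct_mulVec_eq_sum_eigenvalues]
  refine Finset.sum_nonpos fun i _ => ?_
  by_cases hi : 0 < hA.eigenvalues i
  · simp [hcoord i hi]
  · exact mul_nonpos_of_nonpos_of_nonneg (not_lt.1 hi) (sq_nonneg _)

theorem finrank_le_card_neg_eigenvalues (V : Submodule ℝ (ι → ℝ))
    (hV : ∀ x ∈ V, x ≠ 0 → x ⬝ᵥ (A *ᵥ x) < 0) :
    finrank ℝ V ≤ #{i | hA.eigenvalues i < 0} := by
  refine hA.finrank_le_card_filter_eigenvalues (· < 0) V fun x hx hcoord => ?_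
  by_contra hne
  refine (hV x hx hne).not_ge ?_
  rw [hA.dotProduct_mulVec_eq_sum_eigenvalues]
  refine Finset.sum_nonneg fun i _ => ?_
  by_cases hi : hA.eigenvalues i < 0
  · simp [hcoord i hi]
  · exact mul_nonneg (not_lt.1 hi) (sq_nonneg _)

theorem inertia_eq_of_finrank_add_finrank (Vpos Vneg : Submodule ℝ (ι → ℝ))
    (hVpos : ∀ x ∈ Vpos, x ≠ 0 → 0 < x ⬝ᵥ (A *ᵥ x))
    (hVneg : ∀ x ∈ Vneg, x ≠ 0 → x ⬝ᵥ (A *ᵥ x) < 0)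
    (hdim : finrank ℝ Vpos + finrank ℝ Vneg = Fintype.card ι) :
    #{i | 0 < hA.eigenvalues i} = finrank ℝ Vpos ∧ #{i | hA.eigenvalues i < 0} = finrank ℝ Vneg ∧
      #{i | hA.eigenvalues i = 0} = 0 := by
  have hpos := hA.finrank_le_card_pos_eigenvalues Vpos hVpos
  have hneg := hA.finrank_le_card_neg_eigenvalues Vneg hVneg
  have htotal := card_filter_pos_add_card_filter_neg_add_card_filter_eq_zero hA.eigenvalues
  omega

theorem isUnit_det_of_card_filter_eigenvalues_eq_zero (h : #{i | hA.eigenvalues i = 0} = 0) :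
    IsUnit A.det := by
  rw [hA.det_eq_prod_eigenvalues, isUnit_iff_ne_zero, Finset.prod_ne_zero_iff]
  have hne : ∀ i, hA.eigenvalues i ≠ 0 := by simpa [Finset.filter_eq_empty_iff] using h
  exact fun i _ => hne i

end Matrix.IsHermitian

namespace Matrix

variable {α β R : Type*} [Fintype α] [Fintype β]

theorem sumElim_dotProduct_fromBlocks_mulVec [CommRing R] (A : Matrix α α R) (B : Matrix β α R)
    (C : Matrix β β R) (x : α → R) (y : β → R) :
    Sum.elim x y ⬝ᵥ (fromBlocks A Bᵀ B (-C) *ᵥ Sum.elim x y) =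
      x ⬝ᵥ (A *ᵥ x) + 2 * (y ⬝ᵥ (B *ᵥ x)) - y ⬝ᵥ (C *ᵥ y) := by
  rw [fromBlocks_mulVec, Sum.elim_comp_inl, Sum.elim_comp_inr, sumElim_dotProduct_sumElim,
    dotProduct_add, dotProduct_add, dotProduct_mulVec x Bᵀ, vecMul_transpose,
    dotProduct_comm _ y, neg_mulVec, dotProduct_neg]
  ring

theorem PosDef.fromBlocks_zero_zero [CommRing R] [PartialOrder R] [StarRing R]
    [IsOrderedAddMonoid R] {A : Matrix α α R} {D : Matrix β β R} (hA : A.PosDef)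
    (hD : D.PosDef) : (fromBlocks A 0 0 D).PosDef := by
  refine PosDef.of_dotProduct_mulVec_pos
    (hA.isHermitian.fromBlocks (by simp) hD.isHermitian) fun z hz => ?_
  obtain ⟨x, y, rfl⟩ : ∃ x y, z = Sum.elim x y := ⟨_, _, (Sum.elim_comp_inl_inr z).symm⟩
  simp only [fromBlocks_mulVec, Sum.elim_comp_inl, Sum.elim_comp_inr, zero_mulVec, add_zero,
    zero_add, Function.star_sumElim, sumElim_dotProduct_sumElim]
  rcases eq_or_ne x 0 with rfl | hx
  · have hy : y ≠ 0 := by rintro rfl; exact hz Sum.elim_zero_zero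
    simpa using hD.dotProduct_mulVec_pos hy
  · exact add_pos_of_pos_of_nonneg (hA.dotProduct_mulVec_pos hx)
      (hD.posSemidef.dotProduct_mulVec_nonneg y)

theorem inertia_fromBlocks_of_posDef [DecidableEq α] [DecidableEq β]
    {A : Matrix α α ℝ} {B : Matrix β α ℝ} {C : Matrix β β ℝ} (hA : A.PosDef) (hC : C.PosDef)
    (hK : (fromBlocks A Bᵀ B (-C)).IsHermitian) :
    #{i | 0 < hK.eigenvalues i} = Fintype.card α ∧ #{i | hK.eigenvalues i < 0} = Fintype.card β ∧
      #{i | hK.eigenvalues i = 0} = 0 := by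
  let sumElim := (LinearEquiv.sumArrowLequivProdArrow α β ℝ ℝ).symm.toLinearMap
  let graph := sumElim ∘ₗ LinearMap.id.prod (C⁻¹ * B).mulVecLin
  let tail := sumElim ∘ₗ LinearMap.inr ℝ (α → ℝ) (β → ℝ)
  have graph_injective : Function.Injective graph := fun x x' h =>
    funext fun a => congrFun h (Sum.inl a)
  have tail_injective : Function.Injective tail := fun y y' h =>
    funext fun b => congrFun h (Sum.inr b)
  have hCB (x : α → ℝ) : C *ᵥ ((C⁻¹ * B) *ᵥ x) = B *ᵥ x := by
    rw [mulVec_mulVec, ← Matrix.mul_assoc,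
      mul_nonsing_inv _ ((isUnit_iff_isUnit_det C).1 hC.isUnit), Matrix.one_mul]
  have hpos : ∀ z ∈ LinearMap.range graph, z ≠ 0 → 0 < z ⬝ᵥ (fromBlocks A Bᵀ B (-C) *ᵥ z) := by
    rintro _ ⟨x, rfl⟩ hz
    have hx : x ≠ 0 := by rintro rfl; exact hz (map_zero graph)
    set y := (C⁻¹ * B) *ᵥ x
    change 0 < Sum.elim x y ⬝ᵥ (fromBlocks A Bᵀ B (-C) *ᵥ Sum.elim x y)
    have hAx : 0 < x ⬝ᵥ (A *ᵥ x) := by simpa using hA.dotProduct_mulVec_pos hx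
    have hCy : 0 ≤ y ⬝ᵥ (C *ᵥ y) := by simpa using hC.posSemidef.dotProduct_mulVec_nonneg y
    -- on the graph `B x = C y`, so the form equals `xᵀAx + yᵀCy`
    rw [sumElim_dotProduct_fromBlocks_mulVec, ← hCB x]
    linarith
  have hneg : ∀ z ∈ LinearMap.range tail, z ≠ 0 → z ⬝ᵥ (fromBlocks A Bᵀ B (-C) *ᵥ z) < 0 := by
    rintro _ ⟨y, rfl⟩ hz
    have hy : y ≠ 0 := by rintro rfl; exact hz (map_zero tail)
    change Sum.elim 0 y ⬝ᵥ (fromBlocks A Bᵀ B (-C) *ᵥ Sum.elim 0 y) < 0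
    rw [sumElim_dotProduct_fromBlocks_mulVec]
    simpa using hC.dotProduct_mulVec_pos hy
  have hgraph : finrank ℝ (LinearMap.range graph) = Fintype.card α := by
    rw [LinearMap.finrank_range_of_inj graph_injective, finrank_fintype_fun_eq_card]
  have htail : finrank ℝ (LinearMap.range tail) = Fintype.card β := by
    rw [LinearMap.finrank_range_of_inj tail_injective, finrank_fintype_fun_eq_card]
  obtain ⟨hcard_pos, hcard_neg, hcard_zero⟩ := hK.inertia_eq_of_finrank_add_finrank _ _ hpos hneg
    (by rw [hgraph, htail, Fintype.card_sum])
  exact ⟨hcard_pos.trans hgraph, hcard_neg.trans htail, hcard_zero⟩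

end Matrix

/-- For `W` positive semidefinite, positive diagonal `S`, `Λ`, and `δₚ, δ_d > 0`, the full
regularized symmetrized KKT matrix
`M = [[W + δₚI, 0, Jᵀ], [0, S⁻¹Λ, −I], [J, −I, −δ_d I]]` has inertia `(n+m, m, 0)`;
in particular `M` is invertible. -/
theorem full_kkt_inertia (n m : ℕ)
    (W : Matrix (Fin n) (Fin n) ℝ) (hW : W.PosSemidef)
    (J : Matrix (Fin m) (Fin n) ℝ)
    (s lam : Fin m → ℝ) (hs : ∀ i, 0 < s i) (hlam : ∀ i, 0 < lam i)
    (S Λ : Matrix (Fin m) (Fin m) ℝ)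
    (hS : S = Matrix.diagonal s) (hΛ : Λ = Matrix.diagonal lam)
    (δp δd : ℝ) (hδp : 0 < δp) (hδd : 0 < δd)
    (M : Matrix ((Fin n ⊕ Fin m) ⊕ Fin m) ((Fin n ⊕ Fin m) ⊕ Fin m) ℝ)
    (hM : M = Matrix.fromBlocks
        (Matrix.fromBlocks (W + δp • (1 : Matrix (Fin n) (Fin n) ℝ)) 0 0 (S⁻¹ * Λ))
        (Matrix.fromRows Jᵀ (-1))
        (Matrix.fromCols J (-1))
        (-(δd • (1 : Matrix (Fin m) (Fin m) ℝ))))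
    (hMherm : M.IsHermitian) :
    (Finset.univ.filter fun i => 0 < hMherm.eigenvalues i).card = n + m ∧
    (Finset.univ.filter fun i => hMherm.eigenvalues i < 0).card = m ∧
    (Finset.univ.filter fun i => hMherm.eigenvalues i = 0).card = 0 ∧
    IsUnit M.det := by
  subst hS hΛ
  have hD : ((diagonal s)⁻¹ * diagonal lam).PosDef := by
    rw [inv_eq_right_inv (B := diagonal fun i => (s i)⁻¹)
      (by simp [diagonal_mul_diagonal, (hs _).ne']), diagonal_mul_diagonal]
    exact .diagonal fun i => mul_pos (inv_pos.2 (hs i)) (hlam i)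
  have hA := (PosDef.posSemidef_add hW (PosDef.one.smul hδp)).fromBlocks_zero_zero hD
  have hC : (δd • (1 : Matrix (Fin m) (Fin m) ℝ)).PosDef := PosDef.one.smul hδd
  obtain rfl : M = fromBlocks (fromBlocks (W + δp • 1) 0 0 ((diagonal s)⁻¹ * diagonal lam))
      (fromCols J (-1))ᵀ (fromCols J (-1)) (-(δd • 1)) := by
    rw [hM, transpose_fromCols, transpose_neg, transpose_one]
  obtain ⟨hpos, hneg, hzero⟩ := inertia_fromBlocks_of_posDef hA hC hMherm
  simp only [Fintype.card_sum, Fintype.card_fin] at hpos hneg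
  exact ⟨hpos, hneg, hzero, hMherm.isUnit_det_of_card_filter_eigenvalues_eq_zero hzero⟩
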